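/- Let 1 < p < ∞ and p' = p/(p−1). Suppose g ∈ L^{p'}_loc(μ) and A is a constant such that |∫ b·g dμ| ≤ A·|b|_{H^{1,p}_atb(μ)} for every p-atomic block b. Then g ∈ RBMO(μ) with ‖g‖_* ≤ C·A, where C depends only on p, d, n, C₀ and β_d. -/

import Mathlib

/-!
Common definitions for formalizing Tolsa, "BMO, H¹, and Calderón–Zygmund
operators for non doubling measures".
-/

open MeasureTheory Metric Set Function
open scoped Classical
open scoped ENNReal NNReal BigOperators

noncomputable section

/-- `ℝ^d` with the Euclidean metric. -/
abbrev Euc (d : ℕ) := EuclideanSpace ℝ (Fin d)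

variable {d : ℕ}

/-- The support of a measure: points all of whose balls have positive measure. -/
def measSupp (μ : MeasureTheory.Measure (Euc d)) : Set (Euc d) :=
  {x | ∀ r : ℝ, 0 < r → 0 < μ (Metric.ball x r)}

/-- The growth condition `μ(B(x,r)) ≤ C₀ rⁿ`. -/
def GrowthBound (μ : MeasureTheory.Measure (Euc d)) (n : ℕ) (C₀ : ℝ) : Prop :=
  ∀ (x : Euc d) (r : ℝ), 0 < r → μ (Metric.ball x r) ≤ ENNReal.ofReal (C₀ * r ^ n)

/-- A (closed, axis-parallel) cube with center in the support of `μ` and positive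
side length. -/
structure CubeOf (μ : MeasureTheory.Measure (Euc d)) where
  c : Euc d
  ℓ : ℝ
  ℓ_pos : 0 < ℓ
  c_mem : c ∈ measSupp μ

namespace CubeOf

variable {μ : MeasureTheory.Measure (Euc d)}

/-- The set of points of a cube. -/
def set (Q : CubeOf μ) : Set (Euc d) := {y | ∀ i, |y i - Q.c i| ≤ Q.ℓ / 2}

/-- The concentric dilation `aQ` of a cube, as a set. -/
def dil (Q : CubeOf μ) (a : ℝ) : Set (Euc d) := {y | ∀ i, |y i - Q.c i| ≤ a * Q.ℓ / 2}

/-- The cube `2^k Q`. -/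
def pow2 (Q : CubeOf μ) (k : ℕ) : CubeOf μ :=
  ⟨Q.c, 2 ^ k * Q.ℓ, mul_pos (by positivity) Q.ℓ_pos, Q.c_mem⟩

/-- The cube `6^k Q`. -/
def pow6 (Q : CubeOf μ) (k : ℕ) : CubeOf μ :=
  ⟨Q.c, 6 ^ k * Q.ℓ, mul_pos (by positivity) Q.ℓ_pos, Q.c_mem⟩

end CubeOf

/-- `(α,β)`-doubling cube: `μ(αQ) ≤ β μ(Q)`. -/
def IsDoubling (μ : MeasureTheory.Measure (Euc d)) (α β : ℝ) (Q : CubeOf μ) : Prop :=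
  μ (Q.dil α) ≤ ENNReal.ofReal β * μ Q.set

/-- `N_{Q,R}`: the first integer `k ≥ 1` such that `l(2^k Q) ≥ l(R)`. -/
def NQR {μ : MeasureTheory.Measure (Euc d)} (Q R : CubeOf μ) : ℕ :=
  sInf {k : ℕ | 1 ≤ k ∧ R.ℓ ≤ 2 ^ k * Q.ℓ}

/-- The coefficient `K_{Q,R} = 1 + ∑_{k=1}^{N_{Q,R}} μ(2^k Q)/l(2^k Q)^n`. -/
def Kcoef {μ : MeasureTheory.Measure (Euc d)} (n : ℕ) (Q R : CubeOf μ) : ℝ :=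
  1 + ∑ k ∈ Finset.Icc 1 (NQR Q R), (μ ((Q.pow2 k).set)).toReal / ((2 ^ k * Q.ℓ) ^ n)

/-- The smallest `N ≥ 0` such that `2^N Q` is `(2,βd)`-doubling. -/
def tildeIdx (μ : MeasureTheory.Measure (Euc d)) (βd : ℝ) (Q : CubeOf μ) : ℕ :=
  sInf {N : ℕ | IsDoubling μ 2 βd (Q.pow2 N)}

/-- The cube `Q̃`: the smallest cube `2^N Q`, `N ≥ 0`, which is `(2,βd)`-doubling. -/
def CubeOf.tilde {μ : MeasureTheory.Measure (Euc d)} (Q : CubeOf μ) (βd : ℝ) : CubeOf μ :=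
  Q.pow2 (tildeIdx μ βd Q)

/-- The mean `m_Q f` of `f` over the cube `Q` with respect to `μ`. -/
def mQ (μ : MeasureTheory.Measure (Euc d)) (Q : CubeOf μ) (f : Euc d → ℝ) : ℝ :=
  ⨍ x in Q.set, f x ∂μ

/-- For `μ`-a.e. `x` there are `(2,βd)`-doubling cubes centered at `x` of arbitrarily
small side length. -/
def SmallDoublingAE (μ : MeasureTheory.Measure (Euc d)) (βd : ℝ) : Prop :=
  ∀ᵐ x ∂μ, ∀ ℓ₀ : ℝ, 0 < ℓ₀ → ∃ Q : CubeOf μ, Q.c = x ∧ Q.ℓ < ℓ₀ ∧ IsDoubling μ 2 βd Q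

/-- `C` is an admissible constant in the definition of the `RBMO(μ)` norm of `f`. -/
def RBMOBoundWith (μ : MeasureTheory.Measure (Euc d)) (n : ℕ) (βd : ℝ)
    (f : Euc d → ℝ) (C : ℝ≥0∞) : Prop :=
  (∀ Q : CubeOf μ,
    ∫⁻ x in Q.set, ENNReal.ofReal |f x - mQ μ (Q.tilde βd) f| ∂μ ≤ C * μ (Q.dil 2)) ∧
  (∀ Q R : CubeOf μ, Q.set ⊆ R.set → IsDoubling μ 2 βd Q → IsDoubling μ 2 βd R →
    ENNReal.ofReal |mQ μ Q f - mQ μ R f| ≤ C * ENNReal.ofReal (Kcoef n Q R))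

/-- The `RBMO(μ)` norm `‖f‖_*` (with value `∞` if `f ∉ RBMO(μ)`). -/
def rbmoNorm (μ : MeasureTheory.Measure (Euc d)) (n : ℕ) (βd : ℝ) (f : Euc d → ℝ) : ℝ≥0∞ :=
  sInf {C | RBMOBoundWith μ n βd f C}

/-- The conditions defining `‖f‖_{**,(ρ)}`, for a given family of numbers `fQ`. -/
def StarStarBoundWith (μ : MeasureTheory.Measure (Euc d)) (n : ℕ) (ρ : ℝ)
    (f : Euc d → ℝ) (fQ : CubeOf μ → ℝ) (C : ℝ≥0∞) : Prop :=
  (∀ Q : CubeOf μ, ∫⁻ x in Q.set, ENNReal.ofReal |f x - fQ Q| ∂μ ≤ C * μ (Q.dil ρ)) ∧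
  (∀ Q R : CubeOf μ, Q.set ⊆ R.set →
    ENNReal.ofReal |fQ Q - fQ R| ≤ C * ENNReal.ofReal (Kcoef n Q R))

/-- The norm `‖f‖_{**,(ρ)}`. -/
def starStarNorm (μ : MeasureTheory.Measure (Euc d)) (n : ℕ) (ρ : ℝ) (f : Euc d → ℝ) : ℝ≥0∞ :=
  sInf {C | ∃ fQ : CubeOf μ → ℝ, StarStarBoundWith μ n ρ f fQ C}

end

noncomputable section

variable {d : ℕ}

/-- The conditions defining the `RBMO^p(μ)` norm. -/
def RBMOpBoundWith (μ : MeasureTheory.Measure (Euc d)) (n : ℕ) (βd : ℝ) (p : ℝ)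
    (f : Euc d → ℝ) (C : ℝ≥0∞) : Prop :=
  (∀ Q : CubeOf μ,
    ∫⁻ x in Q.set, ENNReal.ofReal |f x - mQ μ (Q.tilde βd) f| ^ p ∂μ ≤ C ^ p * μ (Q.dil 2)) ∧
  (∀ Q R : CubeOf μ, Q.set ⊆ R.set → IsDoubling μ 2 βd Q → IsDoubling μ 2 βd R →
    ENNReal.ofReal |mQ μ Q f - mQ μ R f| ≤ C * ENNReal.ofReal (Kcoef n Q R))

/-- The `RBMO^p(μ)` norm `‖f‖_{*,p}`. -/
def rbmoPNorm (μ : MeasureTheory.Measure (Euc d)) (n : ℕ) (βd : ℝ) (p : ℝ)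
    (f : Euc d → ℝ) : ℝ≥0∞ :=
  sInf {C | RBMOpBoundWith μ n βd p f C}

/-- Condition (b) of Lemma `fifi` of the paper, with constant `Cb`. -/
def CondB (μ : MeasureTheory.Measure (Euc d)) (n : ℕ) (ρ : ℝ)
    (f : Euc d → ℝ) (Cb : ℝ≥0∞) : Prop :=
  (∀ Q : CubeOf μ, ∫⁻ x in Q.set, ENNReal.ofReal |f x - mQ μ Q f| ∂μ ≤ Cb * μ (Q.dil ρ)) ∧
  (∀ Q R : CubeOf μ, Q.set ⊆ R.set →
    ENNReal.ofReal |mQ μ Q f - mQ μ R f| ≤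
      Cb * ENNReal.ofReal (Kcoef n Q R) * (μ (Q.dil ρ) / μ Q.set + μ (R.dil ρ) / μ R.set))

/-- Condition (c) of Lemma `fifi` of the paper, with constant `Cc`. -/
def CondC (μ : MeasureTheory.Measure (Euc d)) (n : ℕ) (βd : ℝ)
    (f : Euc d → ℝ) (Cc : ℝ≥0∞) : Prop :=
  (∀ Q : CubeOf μ, IsDoubling μ 2 βd Q →
    ∫⁻ x in Q.set, ENNReal.ofReal |f x - mQ μ Q f| ∂μ ≤ Cc * μ Q.set) ∧
  (∀ Q R : CubeOf μ, Q.set ⊆ R.set → IsDoubling μ 2 βd Q → IsDoubling μ 2 βd R →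
    ENNReal.ofReal |mQ μ Q f - mQ μ R f| ≤ Cc * ENNReal.ofReal (Kcoef n Q R))

/-- The conditions defining the norm `‖f‖_∘`, relative to a choice `αQ` of minimizers. -/
def CircBoundWith (μ : MeasureTheory.Measure (Euc d)) (n : ℕ) (βd : ℝ)
    (f : Euc d → ℝ) (αQ : CubeOf μ → ℝ) (C : ℝ≥0∞) : Prop :=
  (∀ Q : CubeOf μ,
    ∫⁻ x in Q.set, ENNReal.ofReal |f x - αQ (Q.tilde βd)| ∂μ ≤ C * μ (Q.dil 2)) ∧
  (∀ Q R : CubeOf μ, Q.set ⊆ R.set → IsDoubling μ 2 βd Q → IsDoubling μ 2 βd R →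
    ENNReal.ofReal |αQ Q - αQ R| ≤ C * ENNReal.ofReal (Kcoef n Q R))

/-- The norm `‖f‖_∘`, relative to a choice `αQ` of minimizers. -/
def circNorm (μ : MeasureTheory.Measure (Euc d)) (n : ℕ) (βd : ℝ)
    (f : Euc d → ℝ) (αQ : CubeOf μ → ℝ) : ℝ≥0∞ :=
  sInf {C | CircBoundWith μ n βd f αQ C}

/-- An atomic block: a function supported on a cube `R`, with zero integral, of the
form `b = ∑ λⱼ aⱼ` with `aⱼ` supported on cubes `Qⱼ ⊆ R` and
`‖aⱼ‖_{L∞(μ)} ≤ (μ(2Qⱼ) K_{Qⱼ,R})⁻¹`. -/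
structure AtomicBlock (μ : MeasureTheory.Measure (Euc d)) (n : ℕ) where
  b : Euc d → ℝ
  R : CubeOf μ
  lam : ℕ → ℝ
  a : ℕ → Euc d → ℝ
  Qj : ℕ → CubeOf μ
  integrable : MeasureTheory.Integrable b μ
  supp_b : ∀ x ∉ R.set, b x = 0
  int_zero : ∫ x, b x ∂μ = 0
  Qj_sub : ∀ j, (Qj j).set ⊆ R.set
  a_supp : ∀ j, ∀ x ∉ (Qj j).set, a j x = 0
  a_meas : ∀ j, MeasureTheory.AEStronglyMeasurable (a j) μ
  a_bound : ∀ j, MeasureTheory.eLpNorm (a j) ⊤ μ ≤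
    (μ ((Qj j).dil 2) * ENNReal.ofReal (Kcoef n (Qj j) R))⁻¹
  lam_summable : Summable fun j => |lam j|
  b_eq : ∀ᵐ x ∂μ, HasSum (fun j => lam j * a j x) (b x)

/-- `|b|_{H^{1,∞}_atb(μ)} = ∑ⱼ |λⱼ|` for the given decomposition. -/
def AtomicBlock.size {μ : MeasureTheory.Measure (Euc d)} {n : ℕ}
    (B : AtomicBlock μ n) : ℝ :=
  ∑' j, |B.lam j|

/-- The `H^{1,∞}_atb(μ)` norm (with value `∞` outside the space). -/
def hatbNorm (μ : MeasureTheory.Measure (Euc d)) (n : ℕ) (f : Euc d → ℝ) : ℝ≥0∞ :=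
  sInf {t : ℝ≥0∞ | ∃ B : ℕ → AtomicBlock μ n,
    (∀ᵐ x ∂μ, HasSum (fun i => (B i).b x) (f x)) ∧
    t = ∑' i, ENNReal.ofReal ((B i).size)}

/-- A `p`-atomic block: like an atomic block, but with the size condition
`‖aⱼ‖_{L^p(μ)} ≤ μ(2Qⱼ)^{1/p-1} K_{Qⱼ,R}⁻¹`. -/
structure PAtomicBlock (μ : MeasureTheory.Measure (Euc d)) (n : ℕ) (p : ℝ) where
  b : Euc d → ℝ
  R : CubeOf μ
  lam : ℕ → ℝ
  a : ℕ → Euc d → ℝ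
  Qj : ℕ → CubeOf μ
  integrable : MeasureTheory.Integrable b μ
  supp_b : ∀ x ∉ R.set, b x = 0
  int_zero : ∫ x, b x ∂μ = 0
  Qj_sub : ∀ j, (Qj j).set ⊆ R.set
  a_supp : ∀ j, ∀ x ∉ (Qj j).set, a j x = 0
  a_meas : ∀ j, MeasureTheory.AEStronglyMeasurable (a j) μ
  a_bound : ∀ j, MeasureTheory.eLpNorm (a j) (ENNReal.ofReal p) μ ≤
    μ ((Qj j).dil 2) ^ (1 / p - 1) * (ENNReal.ofReal (Kcoef n (Qj j) R))⁻¹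
  lam_summable : Summable fun j => |lam j|
  b_eq : ∀ᵐ x ∂μ, HasSum (fun j => lam j * a j x) (b x)

/-- `|b|_{H^{1,p}_atb(μ)} = ∑ⱼ |λⱼ|` for the given decomposition. -/
def PAtomicBlock.size {μ : MeasureTheory.Measure (Euc d)} {n : ℕ} {p : ℝ}
    (B : PAtomicBlock μ n p) : ℝ :=
  ∑' j, |B.lam j|

/-- The `H^{1,p}_atb(μ)` norm (with value `∞` outside the space). -/
def hatbPNorm (μ : MeasureTheory.Measure (Euc d)) (n : ℕ) (p : ℝ) (f : Euc d → ℝ) : ℝ≥0∞ :=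
  sInf {t : ℝ≥0∞ | ∃ B : ℕ → PAtomicBlock μ n p,
    (∀ᵐ x ∂μ, HasSum (fun i => (B i).b x) (f x)) ∧
    t = ∑' i, ENNReal.ofReal ((B i).size)}

/-- A Calderón–Zygmund kernel of dimension `n`, with constant `Ck` and Hölder
exponent `δ`. -/
def CZKernelBound (n : ℕ) (k : Euc d → Euc d → ℝ) (Ck δ : ℝ) : Prop :=
  (∀ x y : Euc d, x ≠ y → |k x y| ≤ Ck / dist x y ^ (n : ℝ)) ∧
  (∀ x x' y : Euc d, x ≠ y → dist x x' ≤ dist x y / 2 →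
    |k x y - k x' y| + |k y x - k y x'| ≤ Ck * dist x x' ^ δ / dist x y ^ ((n : ℝ) + δ))

/-- The truncated operator `T_ε f(x) = ∫_{|x-y|>ε} k(x,y) f(y) dμ(y)`. -/
def trunc (μ : MeasureTheory.Measure (Euc d)) (k : Euc d → Euc d → ℝ) (ε : ℝ)
    (f : Euc d → ℝ) (x : Euc d) : ℝ :=
  ∫ y in {y | ε < dist x y}, k x y * f y ∂μ

/-- The non-centered doubling maximal operator `N`. -/
def Nop (μ : MeasureTheory.Measure (Euc d)) (βd : ℝ) (f : Euc d → ℝ) (x : Euc d) : ℝ≥0∞ :=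
  ⨆ (Q : CubeOf μ) (_ : x ∈ Q.set) (_ : IsDoubling μ 2 βd Q),
    (∫⁻ y in Q.set, ENNReal.ofReal |f y| ∂μ) / μ Q.set

/-- The sharp maximal operator `M^♯`. -/
def Msharp (μ : MeasureTheory.Measure (Euc d)) (n : ℕ) (βd : ℝ)
    (f : Euc d → ℝ) (x : Euc d) : ℝ≥0∞ :=
  (⨆ (Q : CubeOf μ) (_ : x ∈ Q.set),
    (∫⁻ y in Q.set, ENNReal.ofReal |f y - mQ μ (Q.tilde βd) f| ∂μ) / μ (Q.dil (3/2))) +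
  ⨆ (Q : CubeOf μ) (R : CubeOf μ) (_ : x ∈ Q.set) (_ : Q.set ⊆ R.set)
      (_ : IsDoubling μ 2 βd Q) (_ : IsDoubling μ 2 βd R),
    ENNReal.ofReal (|mQ μ Q f - mQ μ R f| / Kcoef n Q R)

/-- The weight functions `w_i = χ_{Q_i} / ∑_k χ_{Q_k}` of the Calderón–Zygmund
decomposition. -/
def czWeight {μ : MeasureTheory.Measure (Euc d)} (J : Finset ℕ) (Q : ℕ → CubeOf μ)
    (i : ℕ) (x : Euc d) : ℝ :=
  Set.indicator (Q i).set
    (fun y => (((J.filter fun kk => y ∈ (Q kk).set).card : ℝ))⁻¹) x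

/-- The smallest `(6,6^{n+1})`-doubling cube of the form `6^k Q`, `k ≥ 1`. -/
def smallest6Doubling (μ : MeasureTheory.Measure (Euc d)) (n : ℕ) (Q : CubeOf μ) : CubeOf μ :=
  Q.pow6 (sInf {k : ℕ | 1 ≤ k ∧ IsDoubling μ 6 (6 ^ (n + 1)) (Q.pow6 k)})

end


noncomputable section AuxStatement11
variable {d : ℕ}

namespace CubeOf
variable {μ : MeasureTheory.Measure (Euc d)}

lemma set_mono {Q R : CubeOf μ} (hc : Q.c = R.c) (h : Q.ℓ ≤ R.ℓ) : Q.set ⊆ R.set := by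
  intro y hy i
  rw [← hc]
  exact (hy i).trans (by linarith)

lemma set_subset_dil (Q : CubeOf μ) {a : ℝ} (ha : 1 ≤ a) : Q.set ⊆ Q.dil a := by
  intro y hy i
  refine (hy i).trans ?_
  have := Q.ℓ_pos
  nlinarith

lemma dil_one (Q : CubeOf μ) : Q.dil 1 = Q.set := by
  unfold CubeOf.dil CubeOf.set
  norm_num

lemma isClosed_dil (Q : CubeOf μ) (a : ℝ) : IsClosed (Q.dil a) := by
  have : Q.dil a = ⋂ i, {y : Euc d | |y i - Q.c i| ≤ a * Q.ℓ / 2} := by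
    ext y; simp [CubeOf.dil]
  rw [this]
  refine isClosed_iInter fun i => ?_
  have hc : Continuous fun y : Euc d => |y i - Q.c i| :=
    ((EuclideanSpace.proj i).continuous.sub continuous_const).abs
  exact isClosed_le hc continuous_const

lemma measurableSet_dil (Q : CubeOf μ) (a : ℝ) : MeasurableSet (Q.dil a) :=
  (Q.isClosed_dil a).measurableSet

lemma isClosed_set (Q : CubeOf μ) : IsClosed Q.set := by
  rw [← Q.dil_one]; exact Q.isClosed_dil 1

lemma measurableSet_set (Q : CubeOf μ) : MeasurableSet Q.set :=
  Q.isClosed_set.measurableSet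

lemma dist_coord_le {y c : Euc d} (i : Fin d) : |y i - c i| ≤ dist y c := by
  rw [EuclideanSpace.dist_eq]
  have h1 : |y i - c i| = Real.sqrt (dist (y i) (c i) ^ 2) := by
    rw [Real.sqrt_sq dist_nonneg, Real.dist_eq]
  rw [h1]
  apply Real.sqrt_le_sqrt
  exact Finset.single_le_sum (f := fun j : Fin d => dist (y j) (c j) ^ 2)
    (fun j _ => sq_nonneg _) (Finset.mem_univ i)

lemma ball_subset_set (Q : CubeOf μ) : Metric.ball Q.c (Q.ℓ / 2) ⊆ Q.set := by
  intro y hy i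
  have := dist_coord_le (y := y) (c := Q.c) i
  exact this.trans (le_of_lt (Metric.mem_ball.1 hy))

lemma measure_set_pos (Q : CubeOf μ) : 0 < μ Q.set :=
  lt_of_lt_of_le (Q.c_mem (Q.ℓ / 2) (by have := Q.ℓ_pos; positivity))
    (measure_mono Q.ball_subset_set)

lemma dil_subset_ball (Q : CubeOf μ) {a : ℝ} (ha : 0 < a) (hd : 1 ≤ d) :
    Q.dil a ⊆ Metric.ball Q.c (Real.sqrt d * (a * Q.ℓ)) := by
  intro y hy
  rw [Metric.mem_ball, EuclideanSpace.dist_eq]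
  have hs : (1 : ℝ) ≤ Real.sqrt d := by
    rw [show (1:ℝ) = Real.sqrt 1 by simp]
    exact Real.sqrt_le_sqrt (by exact_mod_cast hd)
  have hl := Q.ℓ_pos
  have h1 : ∑ i, dist (y i) (Q.c i) ^ 2 ≤ (d : ℝ) * (a * Q.ℓ / 2) ^ 2 := by
    calc ∑ i, dist (y i) (Q.c i) ^ 2 ≤ ∑ _i : Fin d, (a * Q.ℓ / 2) ^ 2 := by
          apply Finset.sum_le_sum; intro i _
          have h0 : dist (y i) (Q.c i) = |y i - Q.c i| := Real.dist_eq _ _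
          have := hy i
          nlinarith [abs_nonneg (y i - Q.c i), dist_nonneg (x := y i) (y := Q.c i)]
      _ = (d : ℝ) * (a * Q.ℓ / 2) ^ 2 := by
          simp [Finset.sum_const, Finset.card_univ]
  calc Real.sqrt (∑ i, dist (y i) (Q.c i) ^ 2) ≤ Real.sqrt ((d:ℝ) * (a * Q.ℓ / 2) ^ 2) :=
        Real.sqrt_le_sqrt h1
    _ = Real.sqrt d * (a * Q.ℓ / 2) := by
        rw [Real.sqrt_mul (by positivity), Real.sqrt_sq (by positivity)]
    _ < Real.sqrt d * (a * Q.ℓ) := by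
        have h3 : 0 < a * Q.ℓ / 2 := by positivity
        nlinarith

lemma measure_dil_le {n : ℕ} {C₀ : ℝ} (hG : GrowthBound μ n C₀) (hd : 1 ≤ d)
    (Q : CubeOf μ) {a : ℝ} (ha : 0 < a) :
    μ (Q.dil a) ≤ ENNReal.ofReal (C₀ * (Real.sqrt d * (a * Q.ℓ)) ^ n) := by
  refine (measure_mono (Q.dil_subset_ball ha hd)).trans ?_
  exact hG _ _ (by have := Q.ℓ_pos; have : (0:ℝ) < Real.sqrt d := Real.sqrt_pos.2 (by exact_mod_cast hd); positivity)

lemma measure_dil_lt_top {n : ℕ} {C₀ : ℝ} (hG : GrowthBound μ n C₀) (hd : 1 ≤ d)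
    (Q : CubeOf μ) {a : ℝ} (ha : 0 < a) : μ (Q.dil a) < ∞ :=
  lt_of_le_of_lt (Q.measure_dil_le hG hd ha) ENNReal.ofReal_lt_top

lemma measure_set_lt_top {n : ℕ} {C₀ : ℝ} (hG : GrowthBound μ n C₀) (hd : 1 ≤ d)
    (Q : CubeOf μ) : μ Q.set < ∞ := by
  rw [← Q.dil_one]; exact Q.measure_dil_lt_top hG hd one_pos

lemma pow2_c (Q : CubeOf μ) (k : ℕ) : (Q.pow2 k).c = Q.c := rfl
lemma pow2_ℓ (Q : CubeOf μ) (k : ℕ) : (Q.pow2 k).ℓ = 2 ^ k * Q.ℓ := rfl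

lemma pow2_dil_two (Q : CubeOf μ) (k : ℕ) : (Q.pow2 k).dil 2 = (Q.pow2 (k+1)).set := by
  have h2 : 2 * (2 ^ k * Q.ℓ) / 2 = 2 ^ (k+1) * Q.ℓ / 2 := by ring
  ext y
  simp only [CubeOf.dil, CubeOf.set, pow2_c, pow2_ℓ, Set.mem_setOf_eq, h2]

lemma subset_pow2 (Q : CubeOf μ) (k : ℕ) : Q.set ⊆ (Q.pow2 k).set :=
  set_mono rfl (by
    rw [pow2_ℓ]
    have h1 : (1:ℝ) ≤ 2 ^ k := by
      calc (1:ℝ) = 2 ^ 0 := by norm_num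
        _ ≤ 2 ^ k := pow_le_pow_right₀ (by norm_num) (Nat.zero_le k)
    nlinarith [Q.ℓ_pos])

lemma pow2_mono (Q : CubeOf μ) {j k : ℕ} (h : j ≤ k) : (Q.pow2 j).set ⊆ (Q.pow2 k).set :=
  set_mono rfl (by rw [pow2_ℓ, pow2_ℓ]; have := Q.ℓ_pos; gcongr; norm_num)

end CubeOf

section KBounds
variable {μ : MeasureTheory.Measure (Euc d)} {n : ℕ} {C₀ βd : ℝ}

lemma CubeOf.measure_set_le (hG : GrowthBound μ n C₀) (hd : 1 ≤ d) (Q : CubeOf μ) :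
    μ Q.set ≤ ENNReal.ofReal (C₀ * (Real.sqrt d * Q.ℓ) ^ n) := by
  rw [← Q.dil_one]
  simpa using Q.measure_dil_le hG hd one_pos

lemma exists_pow2_doubling (hG : GrowthBound μ n C₀) (hd : 1 ≤ d) (hC₀ : 0 < C₀)
    (hβ : (2:ℝ) ^ n < βd) (Q : CubeOf μ) : ∃ N, IsDoubling μ 2 βd (Q.pow2 N) := by
  by_contra hcon
  push_neg at hcon
  have h2n : (0:ℝ) < 2 ^ n := by positivity
  have hβ0 : (0:ℝ) < βd := lt_trans h2n hβ
  have hsd : (0:ℝ) < Real.sqrt d := Real.sqrt_pos.2 (by exact_mod_cast hd)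
  have hl := Q.ℓ_pos
  have step : ∀ N, ENNReal.ofReal βd * μ ((Q.pow2 N).set) ≤ μ ((Q.pow2 (N+1)).set) := by
    intro N
    have h := hcon N
    unfold IsDoubling at h
    rw [Q.pow2_dil_two N] at h
    exact (not_le.1 h).le
  have chain : ∀ N, (ENNReal.ofReal βd) ^ N * μ Q.set ≤ μ ((Q.pow2 N).set) := by
    intro N
    induction N with
    | zero => simpa using measure_mono (Q.subset_pow2 0)
    | succ N ih =>
      calc (ENNReal.ofReal βd) ^ (N+1) * μ Q.set
          = ENNReal.ofReal βd * ((ENNReal.ofReal βd) ^ N * μ Q.set) := by ring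
        _ ≤ ENNReal.ofReal βd * μ ((Q.pow2 N).set) := by gcongr
        _ ≤ μ ((Q.pow2 (N+1)).set) := step N
  set m : ℝ := (μ Q.set).toReal with hm
  have hmpos : 0 < m := ENNReal.toReal_pos Q.measure_set_pos.ne' (Q.measure_set_lt_top hG hd).ne
  set Creal : ℝ := C₀ * (Real.sqrt d * Q.ℓ) ^ n with hC
  have hCpos : 0 < Creal := by positivity
  obtain ⟨N, hN⟩ := pow_unbounded_of_one_lt (Creal / m)
    (show (1:ℝ) < βd / 2 ^ n from (one_lt_div h2n).2 hβ)
  have hreal : βd ^ N * m ≤ (2 ^ n) ^ N * Creal := by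
    have h1 : ((ENNReal.ofReal βd) ^ N * μ Q.set).toReal = βd ^ N * m := by
      rw [ENNReal.toReal_mul, ENNReal.toReal_pow, ENNReal.toReal_ofReal hβ0.le]
    have h2 : (μ ((Q.pow2 N).set)).toReal ≤ C₀ * (Real.sqrt d * (2 ^ N * Q.ℓ)) ^ n :=
      ENNReal.toReal_le_of_le_ofReal (by positivity) ((Q.pow2 N).measure_set_le hG hd)
    have h3 : C₀ * (Real.sqrt d * (2 ^ N * Q.ℓ)) ^ n = (2 ^ n) ^ N * Creal := by
      rw [hC]
      rw [show Real.sqrt d * (2 ^ N * Q.ℓ) = 2 ^ N * (Real.sqrt d * Q.ℓ) by ring]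
      rw [mul_pow, ← pow_mul, ← pow_mul, Nat.mul_comm]
      ring
    have h4 : ((ENNReal.ofReal βd) ^ N * μ Q.set).toReal ≤ (μ ((Q.pow2 N).set)).toReal := by
      apply ENNReal.toReal_mono ((Q.pow2 N).measure_set_lt_top hG hd).ne (chain N)
    rw [h1] at h4
    calc βd ^ N * m ≤ (μ ((Q.pow2 N).set)).toReal := h4
      _ ≤ C₀ * (Real.sqrt d * (2 ^ N * Q.ℓ)) ^ n := h2
      _ = (2 ^ n) ^ N * Creal := h3
  have hdiv : (βd / 2 ^ n) ^ N = βd ^ N / (2 ^ n) ^ N := div_pow _ _ _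
  rw [hdiv, div_lt_iff₀ hmpos, div_mul_eq_mul_div, lt_div_iff₀ (by positivity)] at hN
  nlinarith


lemma tilde_doubling (hG : GrowthBound μ n C₀) (hd : 1 ≤ d) (hC₀ : 0 < C₀)
    (hβ : (2:ℝ) ^ n < βd) (Q : CubeOf μ) : IsDoubling μ 2 βd (Q.tilde βd) :=
  Nat.sInf_mem (exists_pow2_doubling hG hd hC₀ hβ Q)

lemma subset_tilde (Q : CubeOf μ) (βd : ℝ) : Q.set ⊆ (Q.tilde βd).set :=
  Q.subset_pow2 _

lemma Kterm_le (hG : GrowthBound μ n C₀) (hd : 1 ≤ d) (hC₀ : 0 < C₀) (Q : CubeOf μ) (k : ℕ) :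
    (μ ((Q.pow2 k).set)).toReal / ((2 ^ k * Q.ℓ) ^ n) ≤ C₀ * Real.sqrt d ^ n := by
  have hl := Q.ℓ_pos
  have hsd : (0:ℝ) < Real.sqrt d := Real.sqrt_pos.2 (by exact_mod_cast hd)
  have h1 : (μ ((Q.pow2 k).set)).toReal ≤ C₀ * (Real.sqrt d * (2 ^ k * Q.ℓ)) ^ n :=
    ENNReal.toReal_le_of_le_ofReal (by positivity) ((Q.pow2 k).measure_set_le hG hd)
  rw [div_le_iff₀ (by positivity)]
  calc (μ ((Q.pow2 k).set)).toReal ≤ C₀ * (Real.sqrt d * (2 ^ k * Q.ℓ)) ^ n := h1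
    _ = C₀ * Real.sqrt d ^ n * (2 ^ k * Q.ℓ) ^ n := by rw [mul_pow]; ring

lemma one_le_Kcoef (Q R : CubeOf μ) : 1 ≤ Kcoef n Q R := by
  unfold Kcoef
  have : 0 ≤ ∑ k ∈ Finset.Icc 1 (NQR Q R), (μ ((Q.pow2 k).set)).toReal / ((2 ^ k * Q.ℓ) ^ n) := by
    apply Finset.sum_nonneg
    intro k _
    have hl := Q.ℓ_pos
    positivity
  linarith

lemma Kcoef_pos (Q R : CubeOf μ) : 0 < Kcoef n Q R := lt_of_lt_of_le one_pos (one_le_Kcoef Q R)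

lemma NQR_self (R : CubeOf μ) : NQR R R = 1 := by
  unfold NQR
  have hl := R.ℓ_pos
  have h1 : 1 ∈ {k : ℕ | 1 ≤ k ∧ R.ℓ ≤ 2 ^ k * R.ℓ} := ⟨le_refl 1, by nlinarith⟩
  exact le_antisymm (Nat.sInf_le h1) (le_csInf ⟨1, h1⟩ fun k hk => hk.1)

lemma Kcoef_self_le (hG : GrowthBound μ n C₀) (hd : 1 ≤ d) (hC₀ : 0 < C₀) (R : CubeOf μ) :
    Kcoef n R R ≤ 1 + C₀ * Real.sqrt d ^ n := by
  unfold Kcoef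
  rw [NQR_self]
  simp only [Finset.Icc_self, Finset.sum_singleton]
  have := Kterm_le hG hd hC₀ R 1
  linarith

lemma NQR_tilde (hβ0 : (0:ℝ) ≤ βd) (Q : CubeOf μ) :
    NQR Q (Q.tilde βd) = max (tildeIdx μ βd Q) 1 := by
  unfold NQR
  have hl := Q.ℓ_pos
  have hset : {k : ℕ | 1 ≤ k ∧ (Q.tilde βd).ℓ ≤ 2 ^ k * Q.ℓ}
      = {k : ℕ | max (tildeIdx μ βd Q) 1 ≤ k} := by
    ext k
    simp only [Set.mem_setOf_eq, max_le_iff, CubeOf.tilde, CubeOf.pow2_ℓ]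
    constructor
    · rintro ⟨h1, h2⟩
      refine ⟨?_, h1⟩
      have h3 : (2:ℝ) ^ tildeIdx μ βd Q ≤ 2 ^ k := by
        have := mul_le_mul_of_nonneg_right (le_of_eq (rfl : (2:ℝ)^tildeIdx μ βd Q * Q.ℓ = _)) (le_refl (0:ℝ))
        nlinarith
      exact (pow_le_pow_iff_right₀ (by norm_num : (1:ℝ) < 2)).1 h3
    · rintro ⟨h1, h2⟩
      refine ⟨h2, ?_⟩
      have h3 : (2:ℝ) ^ tildeIdx μ βd Q ≤ 2 ^ k := pow_le_pow_right₀ (by norm_num) h1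
      nlinarith
  rw [hset]
  have : max (tildeIdx μ βd Q) 1 ∈ {k : ℕ | max (tildeIdx μ βd Q) 1 ≤ k} := by
    simp only [Set.mem_setOf_eq, le_refl]
  exact le_antisymm (Nat.sInf_le this) (le_csInf ⟨_, this⟩ fun k hk => hk)

lemma nondoubling_chain (hβ0 : (0:ℝ) ≤ βd) (Q : CubeOf μ) :
    ∀ j k, k + j ≤ tildeIdx μ βd Q →
      (ENNReal.ofReal βd) ^ j * μ ((Q.pow2 k).set) ≤ μ ((Q.pow2 (k + j)).set) := by
  intro j
  induction j with
  | zero => intro k _; simp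
  | succ j ih =>
    intro k hk
    have h1 : k + j < tildeIdx μ βd Q := by omega
    have h2 : ¬ IsDoubling μ 2 βd (Q.pow2 (k + j)) := Nat.notMem_of_lt_sInf h1
    unfold IsDoubling at h2
    rw [Q.pow2_dil_two (k + j)] at h2
    have h3 : ENNReal.ofReal βd * μ ((Q.pow2 (k + j)).set) ≤ μ ((Q.pow2 (k + j + 1)).set) :=
      (not_le.1 h2).le
    calc (ENNReal.ofReal βd) ^ (j + 1) * μ ((Q.pow2 k).set)
        = ENNReal.ofReal βd * ((ENNReal.ofReal βd) ^ j * μ ((Q.pow2 k).set)) := by ring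
      _ ≤ ENNReal.ofReal βd * μ ((Q.pow2 (k + j)).set) := by gcongr; exact ih k (by omega)
      _ ≤ μ ((Q.pow2 (k + j + 1)).set) := h3

lemma Kcoef_tilde_le (hG : GrowthBound μ n C₀) (hd : 1 ≤ d) (hC₀ : 0 < C₀)
    (hβ : (2:ℝ) ^ n < βd) (Q : CubeOf μ) :
    Kcoef n Q (Q.tilde βd) ≤
      1 + C₀ * Real.sqrt d ^ n + C₀ * Real.sqrt d ^ n * (1 - 2 ^ n / βd)⁻¹ := by
  have h2n : (0:ℝ) < 2 ^ n := by positivity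
  have hβ0 : (0:ℝ) < βd := lt_trans h2n hβ
  set θ : ℝ := 2 ^ n / βd with hθ
  have hθ0 : 0 ≤ θ := by positivity
  have hθ1 : θ < 1 := (div_lt_one hβ0).2 hβ
  set T : ℝ := C₀ * Real.sqrt d ^ n with hT
  have hsd : (0:ℝ) < Real.sqrt d := Real.sqrt_pos.2 (by exact_mod_cast hd)
  have hT0 : 0 ≤ T := by positivity
  set Nt := tildeIdx μ βd Q with hNt
  have hinv : 0 ≤ (1 - θ)⁻¹ := by
    have : 0 < 1 - θ := by linarith
    positivity
  unfold Kcoef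
  rw [NQR_tilde hβ0.le]
  rcases Nat.eq_zero_or_pos Nt with h0 | hpos
  · rw [← hNt, h0]
    simp only [max_eq_right (Nat.zero_le 1)]
    simp only [Finset.Icc_self, Finset.sum_singleton]
    have := Kterm_le hG hd hC₀ Q 1
    nlinarith
  · rw [← hNt, max_eq_left hpos]
    have hterm : ∀ k ∈ Finset.Icc 1 Nt,
        (μ ((Q.pow2 k).set)).toReal / ((2 ^ k * Q.ℓ) ^ n) ≤ T * θ ^ (Nt - k) := by
      intro k hk
      rw [Finset.mem_Icc] at hk
      have hl := Q.ℓ_pos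
      have hchain := nondoubling_chain hβ0.le Q (Nt - k) k (by omega)
      rw [show k + (Nt - k) = Nt by omega] at hchain
      have hfin : μ ((Q.pow2 Nt).set) < ∞ := (Q.pow2 Nt).measure_set_lt_top hG hd
      have hreal : βd ^ (Nt - k) * (μ ((Q.pow2 k).set)).toReal ≤ (μ ((Q.pow2 Nt).set)).toReal := by
        have := ENNReal.toReal_mono hfin.ne hchain
        rwa [ENNReal.toReal_mul, ENNReal.toReal_pow, ENNReal.toReal_ofReal hβ0.le] at this
      have hup : (μ ((Q.pow2 Nt).set)).toReal ≤ T * (2 ^ n) ^ (Nt - k) * (2 ^ k * Q.ℓ) ^ n := by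
        have h2 : (μ ((Q.pow2 Nt).set)).toReal ≤ C₀ * (Real.sqrt d * (2 ^ Nt * Q.ℓ)) ^ n :=
          ENNReal.toReal_le_of_le_ofReal (by positivity) ((Q.pow2 Nt).measure_set_le hG hd)
        have h3 : C₀ * (Real.sqrt d * (2 ^ Nt * Q.ℓ)) ^ n = T * (2 ^ n) ^ (Nt - k) * (2 ^ k * Q.ℓ) ^ n := by
          rw [hT, show (2:ℝ) ^ Nt = 2 ^ (Nt - k) * 2 ^ k by rw [← pow_add]; congr 1; omega]
          rw [show Real.sqrt d * (2 ^ (Nt - k) * 2 ^ k * Q.ℓ) = (2 ^ (Nt-k)) * (Real.sqrt d * (2 ^ k * Q.ℓ)) by ring]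
          rw [mul_pow, mul_pow (Real.sqrt d), ← pow_mul, ← pow_mul, Nat.mul_comm]
          ring
        linarith
      have hbpow : (0:ℝ) < βd ^ (Nt - k) := by positivity
      rw [div_le_iff₀ (by positivity)]
      have hθpow : T * θ ^ (Nt - k) * (2 ^ k * Q.ℓ) ^ n * βd ^ (Nt - k)
          = T * (2 ^ n) ^ (Nt - k) * (2 ^ k * Q.ℓ) ^ n := by
        rw [hθ, div_pow]
        field_simp
      nlinarith [hreal, hup, hbpow, ENNReal.toReal_nonneg (a := μ ((Q.pow2 k).set))]
    have hsum : ∑ k ∈ Finset.Icc 1 Nt, (μ ((Q.pow2 k).set)).toReal / ((2 ^ k * Q.ℓ) ^ n)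
        ≤ ∑ k ∈ Finset.Icc 1 Nt, T * θ ^ (Nt - k) := Finset.sum_le_sum hterm
    have hgeom : ∑ k ∈ Finset.Icc 1 Nt, θ ^ (Nt - k) ≤ (1 - θ)⁻¹ := by
      have hre : ∑ k ∈ Finset.Icc 1 Nt, θ ^ (Nt - k) = ∑ j ∈ Finset.range Nt, θ ^ j := by
        apply Finset.sum_nbij' (fun k => Nt - k) (fun j => Nt - j)
        · intro k hk; rw [Finset.mem_Icc] at hk; rw [Finset.mem_range]; omega
        · intro j hj; rw [Finset.mem_range] at hj; rw [Finset.mem_Icc]; omega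
        · intro k hk; rw [Finset.mem_Icc] at hk; omega
        · intro j hj; rw [Finset.mem_range] at hj; omega
        · intro k _; rfl
      rw [hre]
      calc ∑ j ∈ Finset.range Nt, θ ^ j ≤ ∑' j : ℕ, θ ^ j :=
            Summable.sum_le_tsum _ (fun j _ => by positivity) (summable_geometric_of_lt_one hθ0 hθ1)
        _ = (1 - θ)⁻¹ := tsum_geometric_of_lt_one hθ0 hθ1
    have : ∑ k ∈ Finset.Icc 1 Nt, T * θ ^ (Nt - k) = T * ∑ k ∈ Finset.Icc 1 Nt, θ ^ (Nt - k) := by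
      rw [Finset.mul_sum]
    nlinarith [mul_le_mul_of_nonneg_left hgeom hT0]

end KBounds


lemma ENNReal.rpow_le_rpow_nonpos {x y : ℝ≥0∞} {z : ℝ} (hxy : x ≤ y) (hz : z ≤ 0) :
    y ^ z ≤ x ^ z := by
  have hw : (0:ℝ) ≤ -z := by linarith
  rw [show z = -(-z) by ring, ENNReal.rpow_neg x, ENNReal.rpow_neg y]
  exact ENNReal.inv_le_inv.2 (ENNReal.rpow_le_rpow hxy hw)

section Integr
variable {μ : MeasureTheory.Measure (Euc d)} {n : ℕ} {C₀ p : ℝ} {g : Euc d → ℝ}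

/-- compact sets have finite measure under the growth bound -/
lemma measure_compact_lt_top (hG : GrowthBound μ n C₀) {K : Set (Euc d)} (hK : IsCompact K) :
    μ K < ∞ := by
  obtain ⟨r, hr⟩ := hK.isBounded.subset_closedBall 0
  have h1 : K ⊆ Metric.ball 0 (r + 1) := by
    refine hr.trans (Metric.closedBall_subset_ball (by linarith))
  rcases le_or_gt (r + 1) 0 with h | h
  · have : K ⊆ ∅ := h1.trans (by rw [Metric.ball_eq_empty.2 h])
    rw [Set.subset_empty_iff] at this
    simp [this]
  · exact lt_of_le_of_lt (measure_mono h1) (lt_of_le_of_lt (hG 0 _ h) ENNReal.ofReal_lt_top)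

lemma integrableOn_of_compact (hp : 1 < p) (hgm : MeasureTheory.AEStronglyMeasurable g μ)
    (hloc : ∀ K : Set (Euc d), IsCompact K →
      ∫⁻ x in K, ENNReal.ofReal |g x| ^ (p / (p - 1)) ∂μ < ⊤)
    (hG : GrowthBound μ n C₀) {K : Set (Euc d)} (hK : IsCompact K) :
    MeasureTheory.IntegrableOn g K μ := by
  set q : ℝ := p / (p - 1) with hq
  have hq1 : 1 < q := by
    rw [hq, lt_div_iff₀ (by linarith)]
    linarith
  haveI : IsFiniteMeasure (μ.restrict K) := by
    constructor
    rw [Measure.restrict_apply_univ]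
    exact measure_compact_lt_top hG hK
  have hmem : MemLp g (ENNReal.ofReal q) (μ.restrict K) := by
    constructor
    · exact hgm.restrict
    · rw [eLpNorm_eq_lintegral_rpow_enorm_toReal (by simp [ENNReal.ofReal_eq_zero]; linarith)
        ENNReal.ofReal_ne_top]
      rw [ENNReal.toReal_ofReal (by linarith)]
      apply ENNReal.rpow_lt_top_of_nonneg (by positivity)
      have heq : ∀ x, ‖g x‖ₑ ^ q = ENNReal.ofReal |g x| ^ q := by
        intro x
        rw [Real.enorm_eq_ofReal_abs]
      calc ∫⁻ x, ‖g x‖ₑ ^ q ∂(μ.restrict K)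
          = ∫⁻ x in K, ENNReal.ofReal |g x| ^ q ∂μ := by
            apply lintegral_congr; intro x; exact heq x
        _ ≠ ⊤ := (hloc K hK).ne
  have : MemLp g 1 (μ.restrict K) := by
    apply hmem.mono_exponent
    rw [show (1 : ℝ≥0∞) = ENNReal.ofReal 1 by simp]
    exact ENNReal.ofReal_le_ofReal (by linarith)
  exact this.integrable le_rfl

lemma integrableOn_dil (hp : 1 < p) (hd : 1 ≤ d) (hgm : MeasureTheory.AEStronglyMeasurable g μ)
    (hloc : ∀ K : Set (Euc d), IsCompact K →
      ∫⁻ x in K, ENNReal.ofReal |g x| ^ (p / (p - 1)) ∂μ < ⊤)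
    (hG : GrowthBound μ n C₀) (Q : CubeOf μ) {a : ℝ} (ha : 0 < a) :
    MeasureTheory.IntegrableOn g (Q.dil a) μ := by
  apply MeasureTheory.IntegrableOn.mono_set
    (integrableOn_of_compact hp hgm hloc hG (isCompact_closedBall Q.c (Real.sqrt d * (a * Q.ℓ))))
  exact (Q.dil_subset_ball ha hd).trans Metric.ball_subset_closedBall

lemma integrableOn_set (hp : 1 < p) (hd : 1 ≤ d) (hgm : MeasureTheory.AEStronglyMeasurable g μ)
    (hloc : ∀ K : Set (Euc d), IsCompact K →
      ∫⁻ x in K, ENNReal.ofReal |g x| ^ (p / (p - 1)) ∂μ < ⊤)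
    (hG : GrowthBound μ n C₀) (Q : CubeOf μ) :
    MeasureTheory.IntegrableOn g Q.set μ := by
  rw [← Q.dil_one]
  exact integrableOn_dil hp hd hgm hloc hG Q one_pos

lemma locallyIntegrable (hp : 1 < p) (hgm : MeasureTheory.AEStronglyMeasurable g μ)
    (hloc : ∀ K : Set (Euc d), IsCompact K →
      ∫⁻ x in K, ENNReal.ofReal |g x| ^ (p / (p - 1)) ∂μ < ⊤)
    (hG : GrowthBound μ n C₀) : MeasureTheory.LocallyIntegrable g μ := by
  intro x
  exact ⟨Metric.closedBall x 1, Metric.closedBall_mem_nhds x one_pos,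
    integrableOn_of_compact hp hgm hloc hG (isCompact_closedBall x 1)⟩

end Integr


section Atoms
variable {μ : MeasureTheory.Measure (Euc d)} {n : ℕ} {C₀ βd p : ℝ}

lemma eLpNorm_indicator_bdd (Q : CubeOf μ) (v : Euc d → ℝ) {M : ℝ} (hM : 0 ≤ M)
    (hv : ∀ x, |v x| ≤ M) (q : ℝ≥0∞) :
    eLpNorm (Q.set.indicator v) q μ ≤ ENNReal.ofReal M * μ Q.set ^ (1 / q.toReal) := by
  have h1 : eLpNorm (Q.set.indicator v) q μ ≤ eLpNorm (Q.set.indicator fun _ => M) q μ := by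
    apply eLpNorm_mono
    intro x
    by_cases hx : x ∈ Q.set
    · rw [Set.indicator_of_mem hx, Set.indicator_of_mem hx, Real.norm_eq_abs, Real.norm_eq_abs,
        abs_of_nonneg hM]
      exact hv x
    · rw [Set.indicator_of_notMem hx, Set.indicator_of_notMem hx]
  refine h1.trans ((eLpNorm_indicator_const_le _ _).trans ?_)
  rw [Real.enorm_eq_ofReal hM]

lemma measure_dil_two_pos (Q : CubeOf μ) : 0 < μ (Q.dil 2) :=
  lt_of_lt_of_le Q.measure_set_pos (measure_mono (Q.set_subset_dil one_le_two))

lemma rpow_inv_mul_self {D : ℝ≥0∞} (hD0 : D ≠ 0) (hDt : D ≠ ⊤) (hp : 1 < p) :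
    D⁻¹ * D ^ (1/p : ℝ) = D ^ (1/p - 1 : ℝ) := by
  rw [show (1/p - 1 : ℝ) = 1/p + (-1) by ring, ENNReal.rpow_add _ _ hD0 hDt,
    ENNReal.rpow_neg_one, mul_comm]

lemma atom_norm_le_caseA {n : ℕ} (hG : GrowthBound μ n C₀) (hd : 1 ≤ d) (hp : 1 < p)
    (Q R : CubeOf μ) {v : Euc d → ℝ}
    (hv : ∀ x, |v x| ≤ ((μ (Q.dil 2)).toReal * Kcoef n Q R)⁻¹) :
    eLpNorm (Q.set.indicator v) (ENNReal.ofReal p) μ ≤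
      μ (Q.dil 2) ^ (1 / p - 1 : ℝ) * (ENNReal.ofReal (Kcoef n Q R))⁻¹ := by
  set D := μ (Q.dil 2) with hD
  have hD0 : 0 < D := measure_dil_two_pos Q
  have hDt : D < ∞ := Q.measure_dil_lt_top hG hd two_pos
  have hK : 0 < Kcoef n Q R := Kcoef_pos Q R
  have hDr : 0 < D.toReal := ENNReal.toReal_pos hD0.ne' hDt.ne
  have hM : (0:ℝ) ≤ (D.toReal * Kcoef n Q R)⁻¹ := by positivity
  have h1 := eLpNorm_indicator_bdd Q v hM hv (ENNReal.ofReal p)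
  rw [ENNReal.toReal_ofReal (by linarith)] at h1
  have h2 : ENNReal.ofReal ((D.toReal * Kcoef n Q R)⁻¹) = D⁻¹ * (ENNReal.ofReal (Kcoef n Q R))⁻¹ := by
    rw [mul_inv, ENNReal.ofReal_mul (by positivity), ENNReal.ofReal_inv_of_pos hDr,
      ENNReal.ofReal_toReal hDt.ne, ENNReal.ofReal_inv_of_pos hK]
  refine h1.trans ?_
  rw [h2]
  calc D⁻¹ * (ENNReal.ofReal (Kcoef n Q R))⁻¹ * μ Q.set ^ (1/p : ℝ)
      ≤ D⁻¹ * (ENNReal.ofReal (Kcoef n Q R))⁻¹ * D ^ (1/p : ℝ) := by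
        gcongr
        · exact measure_mono (Q.set_subset_dil one_le_two)
    _ = (D⁻¹ * D ^ (1/p : ℝ)) * (ENNReal.ofReal (Kcoef n Q R))⁻¹ := by ring
    _ = D ^ (1/p - 1 : ℝ) * (ENNReal.ofReal (Kcoef n Q R))⁻¹ := by
        rw [rpow_inv_mul_self hD0.ne' hDt.ne hp]

lemma atom_norm_le_caseB {n : ℕ} (hG : GrowthBound μ n C₀) (hd : 1 ≤ d) (hp : 1 < p)
    (hβ1 : 1 ≤ βd) (Q R : CubeOf μ) (hdou : IsDoubling μ 2 βd Q) {v : Euc d → ℝ}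
    (hv : ∀ x, |v x| ≤ (βd * Kcoef n Q R * (μ Q.set).toReal)⁻¹) :
    eLpNorm (Q.set.indicator v) (ENNReal.ofReal p) μ ≤
      μ (Q.dil 2) ^ (1 / p - 1 : ℝ) * (ENNReal.ofReal (Kcoef n Q R))⁻¹ := by
  set D := μ (Q.dil 2) with hD
  set m := μ Q.set with hm
  have hm0 : 0 < m := Q.measure_set_pos
  have hmt : m < ∞ := Q.measure_set_lt_top hG hd
  have hD0 : 0 < D := measure_dil_two_pos Q
  have hDt : D < ∞ := Q.measure_dil_lt_top hG hd two_pos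
  have hK : 0 < Kcoef n Q R := Kcoef_pos Q R
  have hmr : 0 < m.toReal := ENNReal.toReal_pos hm0.ne' hmt.ne
  have hβ0 : (0:ℝ) < βd := lt_of_lt_of_le one_pos hβ1
  have hM : (0:ℝ) ≤ (βd * Kcoef n Q R * m.toReal)⁻¹ := by positivity
  have h1 := eLpNorm_indicator_bdd Q v hM hv (ENNReal.ofReal p)
  rw [ENNReal.toReal_ofReal (by linarith)] at h1
  have h2 : ENNReal.ofReal ((βd * Kcoef n Q R * m.toReal)⁻¹)
      = (ENNReal.ofReal βd)⁻¹ * (ENNReal.ofReal (Kcoef n Q R))⁻¹ * m⁻¹ := by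
    rw [mul_inv, mul_inv, ENNReal.ofReal_mul (by positivity), ENNReal.ofReal_mul (by positivity),
      ENNReal.ofReal_inv_of_pos hβ0, ENNReal.ofReal_inv_of_pos hK, ENNReal.ofReal_inv_of_pos hmr,
      ENNReal.ofReal_toReal hmt.ne]
  refine h1.trans ?_
  rw [h2]
  have hβe : (1:ℝ≥0∞) ≤ ENNReal.ofReal βd := by
    rw [show (1:ℝ≥0∞) = ENNReal.ofReal 1 by simp]
    exact ENNReal.ofReal_le_ofReal hβ1
  have hβne : ENNReal.ofReal βd ≠ 0 := by
    intro h; rw [h] at hβe; exact (not_le.2 zero_lt_one) hβe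
  have key : (ENNReal.ofReal βd)⁻¹ * m ^ (1/p - 1 : ℝ) ≤ D ^ (1/p - 1 : ℝ) := by
    have hle : D ≤ ENNReal.ofReal βd * m := hdou
    have he0 : (1/p - 1 : ℝ) ≤ 0 := by
      have : 1/p < 1 := by rw [div_lt_one (by linarith)]; linarith
      linarith
    have h3 : (ENNReal.ofReal βd * m) ^ (1/p - 1 : ℝ) ≤ D ^ (1/p - 1 : ℝ) :=
      ENNReal.rpow_le_rpow_nonpos hle he0
    have h4 : (ENNReal.ofReal βd * m) ^ (1/p - 1 : ℝ)
        = (ENNReal.ofReal βd) ^ (1/p - 1 : ℝ) * m ^ (1/p - 1 : ℝ) :=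
      ENNReal.mul_rpow_of_ne_zero hβne hm0.ne' _
    have h5 : (ENNReal.ofReal βd)⁻¹ ≤ (ENNReal.ofReal βd) ^ (1/p - 1 : ℝ) := by
      rw [← ENNReal.rpow_neg_one]
      apply ENNReal.rpow_le_rpow_of_exponent_le hβe
      have : (0:ℝ) ≤ 1/p := by positivity
      linarith
    calc (ENNReal.ofReal βd)⁻¹ * m ^ (1/p - 1 : ℝ)
        ≤ (ENNReal.ofReal βd) ^ (1/p - 1 : ℝ) * m ^ (1/p - 1 : ℝ) := by gcongr
      _ = (ENNReal.ofReal βd * m) ^ (1/p - 1 : ℝ) := h4.symm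
      _ ≤ D ^ (1/p - 1 : ℝ) := h3
  calc (ENNReal.ofReal βd)⁻¹ * (ENNReal.ofReal (Kcoef n Q R))⁻¹ * m⁻¹ * m ^ (1/p : ℝ)
      = ((ENNReal.ofReal βd)⁻¹ * (m⁻¹ * m ^ (1/p : ℝ))) * (ENNReal.ofReal (Kcoef n Q R))⁻¹ := by
        ring
    _ = ((ENNReal.ofReal βd)⁻¹ * m ^ (1/p - 1 : ℝ)) * (ENNReal.ofReal (Kcoef n Q R))⁻¹ := by
        rw [rpow_inv_mul_self hm0.ne' hmt.ne hp]
    _ ≤ D ^ (1/p - 1 : ℝ) * (ENNReal.ofReal (Kcoef n Q R))⁻¹ := by gcongr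

end Atoms

section Blocks
variable {μ : MeasureTheory.Measure (Euc d)} {n : ℕ} {C₀ βd p : ℝ}

lemma integrable_indicator_bdd {S : Set (Euc d)} (hS : MeasurableSet S) (hSfin : μ S < ∞)
    {v : Euc d → ℝ} (hvm : MeasureTheory.AEStronglyMeasurable v (μ.restrict S)) {M : ℝ}
    (hv : ∀ x, |v x| ≤ M) : MeasureTheory.Integrable (S.indicator v) μ := by
  rw [MeasureTheory.integrable_indicator_iff hS]
  haveI : IsFiniteMeasure (μ.restrict S) := ⟨by rwa [Measure.restrict_apply_univ]⟩
  exact (MeasureTheory.integrable_const M).mono' hvm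
    (Filter.Eventually.of_forall fun x => by rw [Real.norm_eq_abs]; exact hv x)

lemma indicator_mul_div {S : Set (Euc d)} {lam : ℝ} (hlam : lam ≠ 0) (v : Euc d → ℝ) (x : Euc d) :
    lam * S.indicator (fun y => v y / lam) x = S.indicator v x := by
  by_cases hx : x ∈ S
  · rw [Set.indicator_of_mem hx, Set.indicator_of_mem hx, mul_div_cancel₀ _ hlam]
  · rw [Set.indicator_of_notMem hx, Set.indicator_of_notMem hx, mul_zero]

lemma exists_two_atom_block (hG : GrowthBound μ n C₀) (hd : 1 ≤ d) (hp : 1 < p)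
    (Q0 Q1 R : CubeOf μ) (h0 : Q0.set ⊆ R.set) (h1 : Q1.set ⊆ R.set)
    (v0 v1 : Euc d → ℝ)
    (hm0 : MeasureTheory.AEStronglyMeasurable v0 μ)
    (hm1 : MeasureTheory.AEStronglyMeasurable v1 μ)
    {lam0 lam1 M0 M1 : ℝ} (hlam0 : 0 < lam0) (hlam1 : 0 < lam1)
    (hv0 : ∀ x, |v0 x| ≤ M0) (hv1 : ∀ x, |v1 x| ≤ M1)
    (hb0 : MeasureTheory.eLpNorm (Q0.set.indicator fun y => v0 y / lam0) (ENNReal.ofReal p) μ ≤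
      μ (Q0.dil 2) ^ (1 / p - 1 : ℝ) * (ENNReal.ofReal (Kcoef n Q0 R))⁻¹)
    (hb1 : MeasureTheory.eLpNorm (Q1.set.indicator fun y => v1 y / lam1) (ENNReal.ofReal p) μ ≤
      μ (Q1.dil 2) ^ (1 / p - 1 : ℝ) * (ENNReal.ofReal (Kcoef n Q1 R))⁻¹)
    (hzero : ∫ x, (Q0.set.indicator v0 x + Q1.set.indicator v1 x) ∂μ = 0) :
    ∃ B : PAtomicBlock μ n p,
      B.b = (fun x => Q0.set.indicator v0 x + Q1.set.indicator v1 x) ∧ B.size = lam0 + lam1 := by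
  have hint0 : MeasureTheory.Integrable (Q0.set.indicator v0) μ :=
    integrable_indicator_bdd Q0.measurableSet_set (Q0.measure_set_lt_top hG hd) hm0.restrict hv0
  have hint1 : MeasureTheory.Integrable (Q1.set.indicator v1) μ :=
    integrable_indicator_bdd Q1.measurableSet_set (Q1.measure_set_lt_top hG hd) hm1.restrict hv1
  have hma0 : MeasureTheory.AEStronglyMeasurable (Q0.set.indicator fun y => v0 y / lam0) μ := by
    apply MeasureTheory.AEStronglyMeasurable.indicator _ Q0.measurableSet_set
    simpa [div_eq_mul_inv] using hm0.mul_const lam0⁻¹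
  have hma1 : MeasureTheory.AEStronglyMeasurable (Q1.set.indicator fun y => v1 y / lam1) μ := by
    apply MeasureTheory.AEStronglyMeasurable.indicator _ Q1.measurableSet_set
    simpa [div_eq_mul_inv] using hm1.mul_const lam1⁻¹
  set lamf : ℕ → ℝ := fun j => if j = 0 then lam0 else if j = 1 then lam1 else 0 with hlamf
  set af : ℕ → Euc d → ℝ := fun j =>
    if j = 0 then Q0.set.indicator (fun y => v0 y / lam0)
    else if j = 1 then Q1.set.indicator (fun y => v1 y / lam1)
    else fun _ => 0 with haf
  set Qjf : ℕ → CubeOf μ := fun j => if j = 0 then Q0 else Q1 with hQjf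
  have hlam_supp : ∀ j ∉ Finset.range 2, lamf j = 0 := by
    intro j hj
    rw [Finset.mem_range] at hj
    rw [hlamf]
    simp only [if_neg (show ¬ j = 0 by omega), if_neg (show ¬ j = 1 by omega)]
  have e0 : lamf 0 = lam0 := by norm_num [hlamf]
  have e1 : lamf 1 = lam1 := by norm_num [hlamf]
  have ea0 : af 0 = Q0.set.indicator (fun y => v0 y / lam0) := by norm_num [haf]
  have ea1 : af 1 = Q1.set.indicator (fun y => v1 y / lam1) := by norm_num [haf]
  have eQ0 : Qjf 0 = Q0 := by norm_num [hQjf]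
  have eQ1 : Qjf 1 = Q1 := by norm_num [hQjf]
  refine ⟨⟨fun x => Q0.set.indicator v0 x + Q1.set.indicator v1 x, R, lamf, af,
    Qjf, hint0.add hint1, ?_, hzero, ?_, ?_, ?_, ?_, ?_, ?_⟩, rfl, ?_⟩
  · intro x hx
    show Q0.set.indicator v0 x + Q1.set.indicator v1 x = 0
    rw [Set.indicator_of_notMem fun h => hx (h0 h),
      Set.indicator_of_notMem fun h => hx (h1 h), add_zero]
  · intro j
    rcases Nat.eq_zero_or_pos j with hj | hj
    · rw [hj, eQ0]; exact h0
    · have : Qjf j = Q0 ∨ Qjf j = Q1 := by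
        rw [hQjf]; simp only []
        by_cases h : j = 0
        · exact Or.inl (if_pos h)
        · exact Or.inr (if_neg h)
      rcases this with h | h <;> rw [h]
      exacts [h0, h1]
  · intro j x hx
    by_cases hj0 : j = 0
    · subst hj0
      rw [eQ0] at hx
      rw [ea0]
      exact Set.indicator_of_notMem hx _
    · by_cases hj1 : j = 1
      · subst hj1
        rw [eQ1] at hx
        rw [ea1]
        exact Set.indicator_of_notMem hx _
      · rw [haf]
        simp only [if_neg hj0, if_neg hj1]
  · intro j
    by_cases hj0 : j = 0
    · subst hj0; rw [ea0]; exact hma0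
    · by_cases hj1 : j = 1
      · subst hj1; rw [ea1]; exact hma1
      · rw [haf]
        simp only [if_neg hj0, if_neg hj1]
        exact MeasureTheory.aestronglyMeasurable_const
  · intro j
    by_cases hj0 : j = 0
    · subst hj0; rw [ea0, eQ0]; exact hb0
    · by_cases hj1 : j = 1
      · subst hj1; rw [ea1, eQ1]; exact hb1
      · rw [haf]
        simp only [if_neg hj0, if_neg hj1]
        simp [MeasureTheory.eLpNorm_zero']
  · apply summable_of_ne_finset_zero (s := Finset.range 2)
    intro j hj
    rw [hlam_supp j hj, abs_zero]
  · apply Filter.Eventually.of_forall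
    intro x
    have hne : ∀ j ∉ Finset.range 2, lamf j * af j x = 0 := by
      intro j hj
      rw [hlam_supp j hj, zero_mul]
    have hsum := hasSum_sum_of_ne_finset_zero (L := SummationFilter.unconditional ℕ) (f := fun j => lamf j * af j x) hne
    have heq : ∑ j ∈ Finset.range 2, lamf j * af j x
        = Q0.set.indicator v0 x + Q1.set.indicator v1 x := by
      rw [Finset.sum_range_succ, Finset.sum_range_succ, Finset.sum_range_zero, zero_add,
        e0, e1, ea0, ea1, indicator_mul_div hlam0.ne' v0 x, indicator_mul_div hlam1.ne' v1 x]
    rwa [heq] at hsum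
  · show (∑' j, |lamf j|) = lam0 + lam1
    rw [tsum_eq_sum (s := Finset.range 2) (fun j hj => by rw [hlam_supp j hj, abs_zero])]
    rw [Finset.sum_range_succ, Finset.sum_range_succ, Finset.sum_range_zero, zero_add,
      e0, e1, abs_of_pos hlam0, abs_of_pos hlam1]

end Blocks


section Pairing
variable {μ : MeasureTheory.Measure (Euc d)} {n : ℕ} {C₀ βd p : ℝ} {g : Euc d → ℝ}

lemma setIntegral_eq_mul_mQ (hG : GrowthBound μ n C₀) (hd : 1 ≤ d) (Q : CubeOf μ)
    (g : Euc d → ℝ) : ∫ x in Q.set, g x ∂μ = (μ Q.set).toReal * mQ μ Q g := by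
  unfold mQ
  rw [setAverage_eq, measureReal_def, smul_eq_mul, ← mul_assoc,
    mul_inv_cancel₀ (ENNReal.toReal_pos Q.measure_set_pos.ne'
      (Q.measure_set_lt_top hG hd).ne).ne', one_mul]

lemma integral_indicator_mul_fun {S : Set (Euc d)} (hS : MeasurableSet S)
    (f g : Euc d → ℝ) :
    ∫ x, S.indicator f x * g x ∂μ = ∫ x in S, f x * g x ∂μ := by
  rw [← MeasureTheory.integral_indicator hS]
  congr 1
  funext x
  rw [← Set.indicator_mul_left]

lemma condB_estimate (hG : GrowthBound μ n C₀) (hd : 1 ≤ d) (hp : 1 < p)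
    (hβ1 : 1 ≤ βd) (hgm : MeasureTheory.AEStronglyMeasurable g μ)
    (hloc : ∀ K : Set (Euc d), IsCompact K →
      ∫⁻ x in K, ENNReal.ofReal |g x| ^ (p / (p - 1)) ∂μ < ⊤)
    {A : ℝ} (hpair : ∀ B : PAtomicBlock μ n p, |∫ x, B.b x * g x ∂μ| ≤ A * B.size)
    (Q R : CubeOf μ) (hQR : Q.set ⊆ R.set) (hdQ : IsDoubling μ 2 βd Q)
    (hdR : IsDoubling μ 2 βd R) :
    |mQ μ Q g - mQ μ R g| ≤ A * (βd * Kcoef n Q R + βd * Kcoef n R R) := by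
  have hβ0 : (0:ℝ) < βd := lt_of_lt_of_le one_pos hβ1
  set mq : ℝ := (μ Q.set).toReal with hmq
  set mr : ℝ := (μ R.set).toReal with hmr
  have hmq0 : 0 < mq := ENNReal.toReal_pos Q.measure_set_pos.ne' (Q.measure_set_lt_top hG hd).ne
  have hmr0 : 0 < mr := ENNReal.toReal_pos R.measure_set_pos.ne' (R.measure_set_lt_top hG hd).ne
  have hK1 : 0 < Kcoef n Q R := Kcoef_pos Q R
  have hK2 : 0 < Kcoef n R R := Kcoef_pos R R
  set lam0 : ℝ := βd * Kcoef n Q R with hlam0d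
  set lam1 : ℝ := βd * Kcoef n R R with hlam1d
  have hlam0 : 0 < lam0 := by positivity
  have hlam1 : 0 < lam1 := by positivity
  set v0 : Euc d → ℝ := fun _ => mq⁻¹ with hv0d
  set v1 : Euc d → ℝ := fun _ => -(mr⁻¹) with hv1d
  have hb0 : MeasureTheory.eLpNorm (Q.set.indicator fun y => v0 y / lam0) (ENNReal.ofReal p) μ ≤
      μ (Q.dil 2) ^ (1 / p - 1 : ℝ) * (ENNReal.ofReal (Kcoef n Q R))⁻¹ := by
    apply atom_norm_le_caseB hG hd hp hβ1 Q R hdQ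
    intro x
    rw [hv0d]
    rw [abs_of_pos (by positivity)]
    rw [div_eq_mul_inv, ← mul_inv]
    apply le_of_eq
    congr 1
    rw [hlam0d, ← hmq]
    ring
  have hb1 : MeasureTheory.eLpNorm (R.set.indicator fun y => v1 y / lam1) (ENNReal.ofReal p) μ ≤
      μ (R.dil 2) ^ (1 / p - 1 : ℝ) * (ENNReal.ofReal (Kcoef n R R))⁻¹ := by
    apply atom_norm_le_caseB hG hd hp hβ1 R R hdR
    intro x
    rw [hv1d]
    simp only [neg_div, abs_neg]
    rw [abs_of_pos (by positivity)]
    rw [div_eq_mul_inv, ← mul_inv]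
    apply le_of_eq
    congr 1
    rw [hlam1d, ← hmr]
    ring
  have hzero : ∫ x, (Q.set.indicator v0 x + R.set.indicator v1 x) ∂μ = 0 := by
    rw [MeasureTheory.integral_add
      (integrable_indicator_bdd Q.measurableSet_set (Q.measure_set_lt_top hG hd)
        MeasureTheory.aestronglyMeasurable_const (fun _ => le_refl |mq⁻¹|))
      (integrable_indicator_bdd R.measurableSet_set (R.measure_set_lt_top hG hd)
        MeasureTheory.aestronglyMeasurable_const (fun _ => le_refl |-(mr⁻¹)|))]
    rw [MeasureTheory.integral_indicator Q.measurableSet_set,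
      MeasureTheory.integral_indicator R.measurableSet_set]
    rw [MeasureTheory.setIntegral_const, MeasureTheory.setIntegral_const,
      smul_eq_mul, smul_eq_mul, measureReal_def, measureReal_def, ← hmq, ← hmr, mul_inv_cancel₀ hmq0.ne', mul_neg,
      mul_inv_cancel₀ hmr0.ne']
    ring
  obtain ⟨B, hBb, hBsize⟩ := exists_two_atom_block hG hd hp Q R R hQR subset_rfl v0 v1
    MeasureTheory.aestronglyMeasurable_const MeasureTheory.aestronglyMeasurable_const
    hlam0 hlam1 (fun _ => le_refl |mq⁻¹|) (fun _ => le_refl |-(mr⁻¹)|) hb0 hb1 hzero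
  have hEst := hpair B
  rw [hBb, hBsize] at hEst
  have hcomp : ∫ x, (Q.set.indicator v0 x + R.set.indicator v1 x) * g x ∂μ
      = mQ μ Q g - mQ μ R g := by
    have hgQ : MeasureTheory.IntegrableOn g Q.set μ := integrableOn_set hp hd hgm hloc hG Q
    have hgR : MeasureTheory.IntegrableOn g R.set μ := integrableOn_set hp hd hgm hloc hG R
    have hI0 : MeasureTheory.Integrable (fun x => Q.set.indicator v0 x * g x) μ := by
      have heq : (fun x => Q.set.indicator v0 x * g x)
          = Q.set.indicator (fun x => v0 x * g x) := by
        funext x; rw [Set.indicator_mul_left]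
      rw [heq, MeasureTheory.integrable_indicator_iff Q.measurableSet_set]
      exact (hgQ.const_mul mq⁻¹)
    have hI1 : MeasureTheory.Integrable (fun x => R.set.indicator v1 x * g x) μ := by
      have heq : (fun x => R.set.indicator v1 x * g x)
          = R.set.indicator (fun x => v1 x * g x) := by
        funext x; rw [Set.indicator_mul_left]
      rw [heq, MeasureTheory.integrable_indicator_iff R.measurableSet_set]
      exact (hgR.const_mul (-(mr⁻¹)))
    have hsplit : ∫ x, (Q.set.indicator v0 x + R.set.indicator v1 x) * g x ∂μ
        = ∫ x, Q.set.indicator v0 x * g x ∂μ + ∫ x, R.set.indicator v1 x * g x ∂μ := by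
      rw [← MeasureTheory.integral_add hI0 hI1]
      congr 1
      funext x
      ring
    rw [hsplit, integral_indicator_mul_fun Q.measurableSet_set,
      integral_indicator_mul_fun R.measurableSet_set]
    have e0 : ∫ x in Q.set, mq⁻¹ * g x ∂μ = mQ μ Q g := by
      rw [integral_const_mul, setIntegral_eq_mul_mQ hG hd Q g, ← hmq,
        ← mul_assoc, inv_mul_cancel₀ hmq0.ne', one_mul]
    have e1 : ∫ x in R.set, -mr⁻¹ * g x ∂μ = -(mQ μ R g) := by
      have hneg : ∀ x, -mr⁻¹ * g x = -(mr⁻¹ * g x) := fun x => by ring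
      rw [show (fun x => -mr⁻¹ * g x) = fun x => -(mr⁻¹ * g x) from funext hneg,
        MeasureTheory.integral_neg, integral_const_mul, setIntegral_eq_mul_mQ hG hd R g, ← hmr,
        ← mul_assoc, inv_mul_cancel₀ hmr0.ne', one_mul]
    rw [e0, e1]
    ring
  rw [hcomp] at hEst
  exact hEst


lemma condA_estimate (hG : GrowthBound μ n C₀) (hd : 1 ≤ d) (hC₀ : 0 < C₀)
    (hβ : (2:ℝ) ^ n < βd) (hp : 1 < p)
    (hgm : MeasureTheory.AEStronglyMeasurable g μ)
    (hloc : ∀ K : Set (Euc d), IsCompact K →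
      ∫⁻ x in K, ENNReal.ofReal |g x| ^ (p / (p - 1)) ∂μ < ⊤)
    {A : ℝ} (hpair : ∀ B : PAtomicBlock μ n p, |∫ x, B.b x * g x ∂μ| ≤ A * B.size)
    (Q : CubeOf μ) :
    ∫ x in Q.set, |g x - mQ μ (Q.tilde βd) g| ∂μ ≤
      A * ((μ (Q.dil 2)).toReal * Kcoef n Q (Q.tilde βd)
        + βd * Kcoef n (Q.tilde βd) (Q.tilde βd) * (μ Q.set).toReal) := by
  have hβ1 : (1:ℝ) ≤ βd := by
    have : (1:ℝ) ≤ 2 ^ n := by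
      calc (1:ℝ) = 2 ^ 0 := by norm_num
        _ ≤ 2 ^ n := pow_le_pow_right₀ (by norm_num) (Nat.zero_le n)
    linarith
  have hβ0 : (0:ℝ) < βd := lt_of_lt_of_le one_pos hβ1
  set R : CubeOf μ := Q.tilde βd with hR
  have hsub : Q.set ⊆ R.set := subset_tilde Q βd
  have hdR : IsDoubling μ 2 βd R := tilde_doubling hG hd hC₀ hβ Q
  set g' : Euc d → ℝ := hgm.mk g with hg'd
  have hg'ae : g =ᵐ[μ] g' := hgm.ae_eq_mk
  have hg'meas : Measurable g' := hgm.measurable_mk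
  set m : ℝ := mQ μ R g with hmdef
  set s : Euc d → ℝ := fun x => if m ≤ g' x then (1:ℝ) else (-1) with hsd
  have hs : Measurable s :=
    Measurable.ite (measurableSet_le measurable_const hg'meas) measurable_const measurable_const
  have hs_bdd : ∀ x, |s x| ≤ 1 := by
    intro x
    rw [hsd]
    simp only []
    split_ifs <;> simp
  have hs2 : ∀ x, s x * (g' x - m) = |g' x - m| := by
    intro x
    rw [hsd]
    simp only []
    split_ifs with h
    · rw [one_mul, abs_of_nonneg (by linarith)]
    · push_neg at h
      rw [abs_of_neg (by linarith)]
      ring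
  set mq : ℝ := (μ Q.set).toReal with hmq
  set mr : ℝ := (μ R.set).toReal with hmr
  have hmq0 : 0 < mq := ENNReal.toReal_pos Q.measure_set_pos.ne' (Q.measure_set_lt_top hG hd).ne
  have hmr0 : 0 < mr := ENNReal.toReal_pos R.measure_set_pos.ne' (R.measure_set_lt_top hG hd).ne
  have hK1 : 0 < Kcoef n Q R := Kcoef_pos Q R
  have hK2 : 0 < Kcoef n R R := Kcoef_pos R R
  set D : ℝ := (μ (Q.dil 2)).toReal with hDd
  have hD0 : 0 < D :=
    ENNReal.toReal_pos (measure_dil_two_pos Q).ne' (Q.measure_dil_lt_top hG hd two_pos).ne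
  set I : ℝ := ∫ x in Q.set, s x ∂μ with hId
  have hsint : MeasureTheory.IntegrableOn s Q.set μ := by
    haveI : IsFiniteMeasure (μ.restrict Q.set) :=
      ⟨by rw [Measure.restrict_apply_univ]; exact Q.measure_set_lt_top hG hd⟩
    exact (MeasureTheory.integrable_const (1:ℝ)).mono' hs.aestronglyMeasurable.restrict
      (Filter.Eventually.of_forall fun x => by rw [Real.norm_eq_abs]; exact hs_bdd x)
  have hIabs : |I| ≤ mq := by
    have := MeasureTheory.norm_setIntegral_le_of_norm_le_const (f := s) (Q.measure_set_lt_top hG hd)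
      (fun x _ => by rw [Real.norm_eq_abs]; exact hs_bdd x)
    rw [Real.norm_eq_abs, measureReal_def] at this
    rw [hId, hmq]
    linarith [this]
  set v : ℝ := I / mr with hvd
  set lam0 : ℝ := D * Kcoef n Q R with hlam0d
  set lam1 : ℝ := βd * Kcoef n R R * mq with hlam1d
  have hlam0 : 0 < lam0 := by positivity
  have hlam1 : 0 < lam1 := by positivity
  have hb0 : MeasureTheory.eLpNorm (Q.set.indicator fun y => s y / lam0) (ENNReal.ofReal p) μ ≤
      μ (Q.dil 2) ^ (1 / p - 1 : ℝ) * (ENNReal.ofReal (Kcoef n Q R))⁻¹ := by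
    apply atom_norm_le_caseA hG hd hp Q R
    intro x
    rw [abs_div, abs_of_pos hlam0]
    rw [div_le_iff₀ hlam0]
    rw [hlam0d, ← hDd]
    rw [inv_mul_cancel₀ (by positivity : (D * Kcoef n Q R) ≠ 0)]
    exact hs_bdd x
  have hb1 : MeasureTheory.eLpNorm (R.set.indicator fun _ => -v / lam1) (ENNReal.ofReal p) μ ≤
      μ (R.dil 2) ^ (1 / p - 1 : ℝ) * (ENNReal.ofReal (Kcoef n R R))⁻¹ := by
    apply atom_norm_le_caseB hG hd hp hβ1 R R hdR
    intro x
    rw [abs_div, abs_of_pos hlam1, abs_neg, hvd, abs_div, abs_of_pos hmr0, div_div]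
    rw [div_le_iff₀ (by positivity), ← hmr]
    have hval : (βd * Kcoef n R R * mr)⁻¹ * (mr * lam1) = mq := by
      rw [hlam1d]
      field_simp
    rw [hval]
    exact hIabs
  have hzero : ∫ x, (Q.set.indicator s x + R.set.indicator (fun _ => -v) x) ∂μ = 0 := by
    rw [MeasureTheory.integral_add
      (integrable_indicator_bdd Q.measurableSet_set (Q.measure_set_lt_top hG hd)
        hs.aestronglyMeasurable.restrict hs_bdd)
      (integrable_indicator_bdd R.measurableSet_set (R.measure_set_lt_top hG hd)
        MeasureTheory.aestronglyMeasurable_const (fun _ => le_refl |-v|))]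
    rw [MeasureTheory.integral_indicator Q.measurableSet_set,
      MeasureTheory.integral_indicator R.measurableSet_set,
      MeasureTheory.setIntegral_const, smul_eq_mul, measureReal_def, ← hmr, ← hId, hvd]
    field_simp
    ring
  obtain ⟨B, hBb, hBsize⟩ := exists_two_atom_block hG hd hp Q R R hsub subset_rfl s (fun _ => -v)
    hs.aestronglyMeasurable MeasureTheory.aestronglyMeasurable_const
    hlam0 hlam1 hs_bdd (fun _ => le_refl |-v|) hb0 hb1 hzero
  have hEst := hpair B
  rw [hBb, hBsize] at hEst
  have hgQ : MeasureTheory.IntegrableOn g Q.set μ := integrableOn_set hp hd hgm hloc hG Q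
  have hsg_int : MeasureTheory.IntegrableOn (fun x => s x * g x) Q.set μ :=
    hgQ.bdd_mul (c := 1) hs.aestronglyMeasurable.restrict (Filter.Eventually.of_forall fun x => by
      rw [Real.norm_eq_abs]; exact hs_bdd x)
  have hcomp : ∫ x, (Q.set.indicator s x + R.set.indicator (fun _ => -v) x) * g x ∂μ
      = ∫ x in Q.set, s x * g x ∂μ - I * m := by
    have hgR : MeasureTheory.IntegrableOn g R.set μ := integrableOn_set hp hd hgm hloc hG R
    have hI0 : MeasureTheory.Integrable (fun x => Q.set.indicator s x * g x) μ := by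
      have heq : (fun x => Q.set.indicator s x * g x)
          = Q.set.indicator (fun x => s x * g x) := by
        funext x; rw [Set.indicator_mul_left]
      rw [heq, MeasureTheory.integrable_indicator_iff Q.measurableSet_set]
      exact hsg_int
    have hI1 : MeasureTheory.Integrable (fun x => R.set.indicator (fun _ => -v) x * g x) μ := by
      have heq : (fun x => R.set.indicator (fun _ => -v) x * g x)
          = R.set.indicator (fun x => -v * g x) := by
        funext x; rw [Set.indicator_mul_left]
      rw [heq, MeasureTheory.integrable_indicator_iff R.measurableSet_set]
      exact (hgR.const_mul (-v))
    have hsplit : ∫ x, (Q.set.indicator s x + R.set.indicator (fun _ => -v) x) * g x ∂μ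
        = ∫ x, Q.set.indicator s x * g x ∂μ
          + ∫ x, R.set.indicator (fun _ => -v) x * g x ∂μ := by
      rw [← MeasureTheory.integral_add hI0 hI1]
      congr 1
      funext x
      ring
    rw [hsplit, integral_indicator_mul_fun Q.measurableSet_set,
      integral_indicator_mul_fun R.measurableSet_set]
    have e1 : ∫ x in R.set, -v * g x ∂μ = -(I * m) := by
      have hneg : ∀ x, -v * g x = -(v * g x) := fun x => by ring
      rw [show (fun x => -v * g x) = fun x => -(v * g x) from funext hneg,
        MeasureTheory.integral_neg, integral_const_mul, setIntegral_eq_mul_mQ hG hd R g,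
        ← hmr, ← hmdef, hvd]
      field_simp
    rw [e1]
    ring
  have habs : ∫ x in Q.set, s x * (g x - m) ∂μ = ∫ x in Q.set, |g x - m| ∂μ := by
    apply MeasureTheory.integral_congr_ae
    apply MeasureTheory.ae_restrict_of_ae
    filter_upwards [hg'ae] with x hx
    rw [hx]
    exact hs2 x
  have hsm : ∫ x in Q.set, s x * (g x - m) ∂μ = ∫ x in Q.set, s x * g x ∂μ - m * I := by
    have heq : ∀ x, s x * (g x - m) = s x * g x - m * s x := fun x => by ring
    rw [MeasureTheory.integral_congr_ae (Filter.Eventually.of_forall fun x => heq x),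
      MeasureTheory.integral_sub hsg_int (hsint.const_mul m),
      integral_const_mul, ← hId]
  have hfinal : ∫ x in Q.set, |g x - m| ∂μ
      = ∫ x, (Q.set.indicator s x + R.set.indicator (fun _ => -v) x) * g x ∂μ := by
    rw [hcomp, ← habs, hsm]
    ring
  calc ∫ x in Q.set, |g x - m| ∂μ
      ≤ |∫ x, (Q.set.indicator s x + R.set.indicator (fun _ => -v) x) * g x ∂μ| := by
        rw [← hfinal]; exact le_abs_self _
    _ ≤ A * (lam0 + lam1) := hEst
    _ = A * (D * Kcoef n Q R + βd * Kcoef n R R * mq) := by rw [hlam0d, hlam1d]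

end Pairing

end AuxStatement11

/-- Lemma 5.2: if `g ∈ L^{p'}_loc(μ)` and the pairing against `g` is bounded on
`p`-atomic blocks, then `g ∈ RBMO(μ)` with `‖g‖_* ≤ C A`. -/
theorem statement11 (d n : ℕ) (hn : 1 ≤ n) (hnd : n ≤ d) (C₀ βd p : ℝ)
    (hC₀ : 0 < C₀) (hβ : (2 : ℝ) ^ n < βd) (hp : 1 < p) :
    ∃ C : ℝ, 0 < C ∧ ∀ μ : MeasureTheory.Measure (Euc d), GrowthBound μ n C₀ →
      SmallDoublingAE μ βd →
      ∀ g : Euc d → ℝ, MeasureTheory.AEStronglyMeasurable g μ →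
        (∀ K : Set (Euc d), IsCompact K →
          ∫⁻ x in K, ENNReal.ofReal |g x| ^ (p / (p - 1)) ∂μ < ⊤) →
      ∀ A : ℝ, 0 ≤ A →
        (∀ B : PAtomicBlock μ n p, |∫ x, B.b x * g x ∂μ| ≤ A * B.size) →
        MeasureTheory.LocallyIntegrable g μ ∧
        rbmoNorm μ n βd g ≤ ENNReal.ofReal (C * A) := by
  have hd : 1 ≤ d := le_trans hn hnd
  have h2n : (0:ℝ) < 2 ^ n := by positivity
  have hβ0 : (0:ℝ) < βd := lt_trans h2n hβ
  have hβ1 : (1:ℝ) ≤ βd := by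
    have h1 : (1:ℝ) ≤ 2 ^ n := by
      calc (1:ℝ) = 2 ^ 0 := by norm_num
        _ ≤ 2 ^ n := pow_le_pow_right₀ (by norm_num) (Nat.zero_le n)
    linarith
  set T : ℝ := C₀ * Real.sqrt d ^ n with hT
  have hT0 : 0 ≤ T := by
    have : (0:ℝ) ≤ Real.sqrt d := Real.sqrt_nonneg _
    positivity
  set CK : ℝ := 1 + T + T * (1 - 2 ^ n / βd)⁻¹ with hCK
  have hθ1 : 2 ^ n / βd < 1 := (div_lt_one hβ0).2 hβ
  have hθ0 : 0 ≤ 2 ^ n / βd := by positivity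
  have hCK0 : 0 ≤ CK := by
    have h1 : 0 < 1 - 2 ^ n / βd := by linarith
    have h2 : 0 ≤ T * (1 - 2 ^ n / βd)⁻¹ := by positivity
    rw [hCK]
    linarith
  refine ⟨CK + βd * (1 + T) + βd * (2 + T) + 1, by positivity, ?_⟩
  set C : ℝ := CK + βd * (1 + T) + βd * (2 + T) + 1 with hC
  intro μ hG hSD g hgm hloc A hA hpair
  have hCA0 : 0 ≤ C * A := by positivity
  refine ⟨locallyIntegrable hp hgm hloc hG, ?_⟩
  apply sInf_le
  constructor
  · -- condition (a)
    intro Q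
    set R : CubeOf μ := Q.tilde βd with hR
    set m : ℝ := mQ μ R g with hm
    have hint : MeasureTheory.IntegrableOn (fun x => |g x - m|) Q.set μ :=
      ((integrableOn_set hp hd hgm hloc hG Q).sub
        (MeasureTheory.integrableOn_const (Q.measure_set_lt_top hG hd).ne)).abs
    have heq : ∫⁻ x in Q.set, ENNReal.ofReal |g x - m| ∂μ
        = ENNReal.ofReal (∫ x in Q.set, |g x - m| ∂μ) :=
      (MeasureTheory.ofReal_integral_eq_lintegral_ofReal hint
        (Filter.Eventually.of_forall fun x => abs_nonneg _)).symm
    rw [heq]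
    have hest := condA_estimate hG hd hC₀ hβ hp hgm hloc hpair Q
    set D : ℝ := (μ (Q.dil 2)).toReal with hD
    have hD0 : 0 < D :=
      ENNReal.toReal_pos (measure_dil_two_pos Q).ne' (Q.measure_dil_lt_top hG hd two_pos).ne
    set mq : ℝ := (μ Q.set).toReal with hmq
    have hmq0 : 0 ≤ mq := ENNReal.toReal_nonneg
    have hmqD : mq ≤ D :=
      ENNReal.toReal_mono (Q.measure_dil_lt_top hG hd two_pos).ne
        (measure_mono (Q.set_subset_dil one_le_two))
    have hK1 : Kcoef n Q R ≤ CK := Kcoef_tilde_le hG hd hC₀ hβ Q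
    have hK1' : 1 ≤ Kcoef n Q R := one_le_Kcoef Q R
    have hK2 : Kcoef n R R ≤ 1 + T := Kcoef_self_le hG hd hC₀ R
    have hK2' : 1 ≤ Kcoef n R R := one_le_Kcoef R R
    have hreal : A * (D * Kcoef n Q R + βd * Kcoef n R R * mq) ≤ C * A * D := by
      have h1 : D * Kcoef n Q R ≤ CK * D := by
        have := mul_le_mul_of_nonneg_left hK1 hD0.le
        linarith
      have h2 : βd * Kcoef n R R * mq ≤ βd * (1 + T) * D := by
        have ha : Kcoef n R R * mq ≤ (1 + T) * D :=
          mul_le_mul hK2 hmqD hmq0 (by linarith)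
        have := mul_le_mul_of_nonneg_left ha hβ0.le
        linarith [this]
      have h3 : C * A * D = A * (C * D) := by ring
      rw [h3]
      apply mul_le_mul_of_nonneg_left _ hA
      have h4 : CK * D + βd * (1 + T) * D ≤ C * D := by
        have hnn : (0:ℝ) ≤ (βd * (2 + T) + 1) * D :=
          mul_nonneg (by positivity) hD0.le
        rw [hC]
        nlinarith [hnn]
      linarith
    calc ENNReal.ofReal (∫ x in Q.set, |g x - m| ∂μ)
        ≤ ENNReal.ofReal (C * A * D) :=
          ENNReal.ofReal_le_ofReal (le_trans hest hreal)
      _ = ENNReal.ofReal (C * A) * ENNReal.ofReal D := ENNReal.ofReal_mul hCA0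
      _ ≤ ENNReal.ofReal (C * A) * μ (Q.dil 2) := by
          gcongr
          rw [hD]
          exact ENNReal.ofReal_toReal_le
  · -- condition (b)
    intro Q R hQR hdQ hdR
    have hest := condB_estimate hG hd hp hβ1 hgm hloc hpair Q R hQR hdQ hdR
    have hK1' : 1 ≤ Kcoef n Q R := one_le_Kcoef Q R
    have hK2 : Kcoef n R R ≤ 1 + T := Kcoef_self_le hG hd hC₀ R
    have hreal : A * (βd * Kcoef n Q R + βd * Kcoef n R R) ≤ C * A * Kcoef n Q R := by
      have hK10 : (0:ℝ) ≤ Kcoef n Q R := by linarith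
      have ha : Kcoef n R R ≤ (1 + T) * Kcoef n Q R := by
        calc Kcoef n R R ≤ 1 + T := hK2
          _ = (1 + T) * 1 := by ring
          _ ≤ (1 + T) * Kcoef n Q R := by
              apply mul_le_mul_of_nonneg_left hK1' (by linarith)
      have h1 : βd * Kcoef n R R ≤ βd * ((1 + T) * Kcoef n Q R) :=
        mul_le_mul_of_nonneg_left ha hβ0.le
      have h2 : βd * Kcoef n Q R + βd * Kcoef n R R ≤ C * Kcoef n Q R := by
        have hnn : (0:ℝ) ≤ (CK + βd * (1 + T) + 1) * Kcoef n Q R :=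
          mul_nonneg (by positivity) hK10
        rw [hC]
        nlinarith [hnn, h1]
      have h3 : C * A * Kcoef n Q R = A * (C * Kcoef n Q R) := by ring
      rw [h3]
      exact mul_le_mul_of_nonneg_left h2 hA
    calc ENNReal.ofReal |mQ μ Q g - mQ μ R g|
        ≤ ENNReal.ofReal (C * A * Kcoef n Q R) :=
          ENNReal.ofReal_le_ofReal (le_trans hest hreal)
      _ = ENNReal.ofReal (C * A) * ENNReal.ofReal (Kcoef n Q R) := ENNReal.ofReal_mul hCA0
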